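/- arXiv:1505.02655 — 7 statements merged into one kernel-verified Lean document; each statement's English description precedes it below -/
import Mathlib

section
/- Let G be a stochastic matrix indexed by a finite set Q with a single bottom strongly connected component, and let y_min be its smallest nonzero entry. For a vector v, define |v|_diff = max over pairs p1, p2 in Q of |v[p1] - v[p2]|. Let r be any real vector indexed by Q and define f(n) = Σ_{i=0}^{n-1} G^i r. Then for all n, |f(n)|_diff ≤ C·|r|_diff, where C = 10·|Q| / y_min^{|Q|}. -/
/-!
Fix a state `s` reachable from every state and write `fₙ = ∑_{i<n} Gⁱ r`. Splitting the
trajectories of the chain at their first visit to `s` writes `fₙ(p) - fₙ(s)` as a sum over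
`i < n` of terms bounded by `|r|_diff` times the probability `σᵢ(p)` that the chain started at
`p` avoids `s` before time `i`. A shortest path to `s` has fewer than `|Q|` edges, each of weight
at least `ymin`, so `σ_{i+|Q|} ≤ (1 - ymin^|Q|) σᵢ` and `∑ᵢ σᵢ ≤ |Q| / ymin^|Q|`. Comparing
two states through `s` gives the bound with constant `2|Q| / ymin^|Q|`.
-/

open Finset Matrix

/-- The diff-seminorm of a vector `v : Q → ℝ`: `|v|_diff = max_{p₁,p₂} |v p₁ - v p₂|`. -/
noncomputable def diffnorm {Q : Type*} [Fintype Q] (v : Q → ℝ) : ℝ :=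
  ⨆ pq : Q × Q, |v pq.1 - v pq.2|

namespace Relation.ReflTransGen

variable {α : Type*} {R : α → α → Prop} {a b : α}

theorem exists_path (h : ReflTransGen R a b) :
    ∃ k, ∃ x : ℕ → α, x 0 = a ∧ x k = b ∧ ∀ i < k, R (x i) (x (i + 1)) := by
  induction h using head_induction_on with
  | refl => exact ⟨0, fun _ => b, rfl, rfl, by simp⟩
  | @head a c hac _ ih =>
    obtain ⟨k, x, hx0, hxk, hx⟩ := ih
    refine ⟨k + 1, fun | 0 => a | i + 1 => x i, rfl, hxk, fun i hi => ?_⟩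
    cases i with
    | zero => simpa [hx0] using hac
    | succ i => exact hx i (by omega)

theorem exists_path_shortcut {k i j : ℕ} {x : ℕ → α} (hx : ∀ m < k, R (x m) (x (m + 1)))
    (hij : i < j) (hjk : j ≤ k) (hxij : x i = x j) :
    ∃ y : ℕ → α, y 0 = x 0 ∧ y (k - (j - i)) = x k ∧
      ∀ m < k - (j - i), R (y m) (y (m + 1)) := by
  refine ⟨fun m => x (if m < i then m else m + (j - i)), ?_, ?_, fun m hm => ?_⟩
  · dsimp only
    split_ifs with h
    · rfl
    · obtain rfl : i = 0 := by omega
      simpa using hxij.symm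
  · dsimp only
    rw [if_neg (by omega), show k - (j - i) + (j - i) = k by omega]
  · dsimp only
    split_ifs with h₁ h₂ h₂
    · exact hx m (by omega)
    · rw [show m + 1 + (j - i) = j by omega, ← hxij, show i = m + 1 by omega]
      exact hx m (by omega)
    · omega
    · rw [show m + 1 + (j - i) = m + (j - i) + 1 by omega]
      exact hx _ (by omega)

theorem exists_path_lt_card [Fintype α] (h : ReflTransGen R a b) :
    ∃ k < Fintype.card α, ∃ x : ℕ → α, x 0 = a ∧ x k = b ∧ ∀ i < k, R (x i) (x (i + 1)) := by
  obtain ⟨k, hpath⟩ := h.exists_path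
  induction k using Nat.strong_induction_on with
  | _ k ih =>
    obtain ⟨x, hx0, hxk, hx⟩ := hpath
    by_cases hk : k < Fintype.card α
    · exact ⟨k, hk, x, hx0, hxk, hx⟩
    obtain ⟨i, hi, j, hj, hne, hxij⟩ := exists_ne_map_eq_of_card_lt_of_maps_to
      (s := range (k + 1)) (t := univ) (f := x) (by simp; omega) (by simp [Set.MapsTo])
    rw [mem_range] at hi hj
    have shorten : ∀ i j, i < j → j < k + 1 → x i = x j → ∃ k < Fintype.card α,
        ∃ x : ℕ → α, x 0 = a ∧ x k = b ∧ ∀ i < k, R (x i) (x (i + 1)) := by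
      intro i j hij hj hxij
      obtain ⟨y, hy0, hyk, hy⟩ := exists_path_shortcut hx hij (by omega) hxij
      exact ih _ (by omega) ⟨y, hy0.trans hx0, hyk.trans hxk, hy⟩
    rcases hne.lt_or_gt with hij | hji
    · exact shorten i j hij hj hxij
    · exact shorten j i hji hi hxij.symm

end Relation.ReflTransGen

section diffnorm

variable {Q : Type*} [Fintype Q]

theorem abs_sub_le_diffnorm (v : Q → ℝ) (p q : Q) : |v p - v q| ≤ diffnorm v :=
  le_ciSup (f := fun pq : Q × Q => |v pq.1 - v pq.2|) (Set.finite_range _).bddAbove (p, q)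

theorem diffnorm_le [Nonempty Q] {v : Q → ℝ} {C : ℝ} (h : ∀ p q, |v p - v q| ≤ C) :
    diffnorm v ≤ C :=
  ciSup_le fun pq => h pq.1 pq.2

theorem diffnorm_nonneg [Nonempty Q] (v : Q → ℝ) : 0 ≤ diffnorm v :=
  (abs_nonneg _).trans (abs_sub_le_diffnorm v (Classical.arbitrary Q) (Classical.arbitrary Q))

variable [DecidableEq Q]

theorem abs_sub_mulVec_le_diffnorm {M : Matrix Q Q ℝ} (hM : M ∈ rowStochastic ℝ Q)
    (v : Q → ℝ) (p q : Q) : |v q - (M *ᵥ v) p| ≤ diffnorm v := by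
  have h : v q - (M *ᵥ v) p = ∑ q', M p q' * (v q - v q') := by
    simp only [mul_sub, sum_sub_distrib, ← sum_mul, sum_row_of_mem_rowStochastic hM, one_mul,
      mulVec_apply_eq_sum]
  rw [h]
  calc |∑ q', M p q' * (v q - v q')| ≤ ∑ q', M p q' * diffnorm v := by
        refine (abs_sum_le_sum_abs _ _).trans (sum_le_sum fun q' _ => ?_)
        rw [abs_mul, abs_of_nonneg (nonneg_of_mem_rowStochastic hM)]
        exact mul_le_mul_of_nonneg_left (abs_sub_le_diffnorm v q q')
          (nonneg_of_mem_rowStochastic hM)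
    _ = diffnorm v := by rw [← sum_mul, sum_row_of_mem_rowStochastic hM, one_mul]

end diffnorm

namespace Matrix

variable {n : Type*} [Fintype n]

theorem mulVec_mono_of_nonneg {M : Matrix n n ℝ} (hM : ∀ i j, 0 ≤ M i j) {u v : n → ℝ}
    (huv : u ≤ v) : M *ᵥ u ≤ M *ᵥ v := fun i =>
  dotProduct_le_dotProduct_of_nonneg_left huv (hM i)

theorem abs_mulVec_apply_le {M : Matrix n n ℝ} (hM : ∀ i j, 0 ≤ M i j) {b : n → ℝ} {D : ℝ}
    (hb : ∀ j, |b j| ≤ D) (i : n) : |(M *ᵥ b) i| ≤ D * (M *ᵥ 1) i := by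
  simp only [mulVec_apply_eq_sum, Pi.one_apply, mul_one, mul_sum]
  refine (abs_sum_le_sum_abs _ _).trans (sum_le_sum fun j _ => ?_)
  rw [abs_mul, abs_of_nonneg (hM i j), mul_comm]
  exact mul_le_mul_of_nonneg_right (hb j) (hM i j)

theorem eq_sum_pow_mulVec_of_succ {R : Type*} [Semiring R] [DecidableEq n] (A : Matrix n n R)
    {x b : ℕ → n → R} (h0 : x 0 = 0) (hsucc : ∀ k, x (k + 1) = b k + A *ᵥ x k) (k : ℕ) :
    x k = ∑ i ∈ range k, A ^ i *ᵥ b (k - 1 - i) := by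
  induction k with
  | zero => simp [h0]
  | succ k ih =>
    rw [hsucc, ih, sum_range_succ', mulVec_sum]
    simp only [pow_succ', ← mulVec_mulVec, pow_zero, one_mulVec, add_tsub_cancel_right,
      tsub_zero, add_comm (b k)]
    congr 2 with i
    rw [show k - (i + 1) = k - 1 - i by omega]

end Matrix

theorem sum_range_le_div_of_decay {a : ℕ → ℝ} {c : ℕ} {β : ℝ} (hβ : 0 < β)
    (ha₀ : ∀ i, 0 ≤ a i) (ha₁ : ∀ i, a i ≤ 1) (hdecay : ∀ i, a (i + c) ≤ (1 - β) * a i)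
    (n : ℕ) : ∑ i ∈ range n, a i ≤ c / β := by
  have hshift : ∑ i ∈ range (c + n), a i ≤ c + (1 - β) * ∑ i ∈ range n, a i := by
    rw [sum_range_add, mul_sum]
    gcongr with i
    · simpa using sum_le_sum fun i (_ : i ∈ range c) => ha₁ i
    · rw [add_comm]; exact hdecay i
  have hmono : ∑ i ∈ range n, a i ≤ ∑ i ∈ range (c + n), a i :=
    sum_le_sum_of_subset_of_nonneg (range_mono (by omega)) fun i _ _ => ha₀ i
  rw [le_div_iff₀ hβ]
  linarith

section Survival

variable {Q : Type*} [Fintype Q] [DecidableEq Q] {G : Matrix Q Q ℝ}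

/-- `survival G s m p` is the probability that the chain with transition matrix `G`, started
at `p`, avoids `s` at all times `0, …, m - 1`. -/
noncomputable def survival (G : Matrix Q Q ℝ) (s : Q) (m : ℕ) : Q → ℝ :=
  G.updateRow s 0 ^ m *ᵥ 1

theorem updateRow_zero_nonneg (hG : G ∈ rowStochastic ℝ Q) (s : Q) (i j : Q) :
    0 ≤ G.updateRow s 0 i j := by
  rw [updateRow_apply]
  split_ifs
  exacts [le_rfl, nonneg_of_mem_rowStochastic hG]

theorem survival_zero (s : Q) : survival G s 0 = 1 := by
  simp [survival]

theorem survival_succ (s : Q) (m : ℕ) :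
    survival G s (m + 1) = Function.update (G *ᵥ survival G s m) s 0 := by
  rw [survival, pow_succ', ← mulVec_mulVec, updateRow_mulVec, zero_dotProduct, survival]

theorem survival_add (s : Q) (i m : ℕ) :
    survival G s (i + m) = G.updateRow s 0 ^ i *ᵥ survival G s m := by
  rw [survival, survival, pow_add, mulVec_mulVec]

theorem survival_nonneg (hG : G ∈ rowStochastic ℝ Q) (s : Q) (m : ℕ) : 0 ≤ survival G s m :=
  fun p => dotProduct_nonneg_of_nonneg (pow_apply_nonneg (updateRow_zero_nonneg hG s) m p)
    zero_le_one

theorem survival_le_one (hG : G ∈ rowStochastic ℝ Q) (s : Q) (m : ℕ) : survival G s m ≤ 1 := by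
  induction m with
  | zero => rw [survival_zero]
  | succ m ih =>
    intro p
    rw [survival_succ]
    by_cases hp : p = s
    · subst hp; simp
    · rw [Function.update_of_ne hp, ← one_vecMul_of_mem_rowStochastic hG]
      exact mulVec_mono_of_nonneg (fun _ _ => nonneg_of_mem_rowStochastic hG) ih p

theorem survival_le_of_path (hG : G ∈ rowStochastic ℝ Q) {s : Q} {ymin : ℝ} (hy : 0 ≤ ymin)
    (hy₁ : ymin ≤ 1) (hymin : ∀ q q', G q q' ≠ 0 → ymin ≤ G q q') {k : ℕ} {x : ℕ → Q}
    (hxk : x k = s) (hx : ∀ i < k, 0 < G (x i) (x (i + 1))) {m : ℕ} (hkm : k < m) :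
    survival G s m (x 0) ≤ 1 - ymin ^ k := by
  obtain ⟨m, rfl⟩ : ∃ m', m = m' + 1 := ⟨m - 1, by omega⟩
  rw [survival_succ]
  induction k generalizing x m with
  | zero => simp [hxk]
  | succ k ih =>
    by_cases hx0 : x 0 = s
    · simpa [hx0] using pow_le_one₀ hy hy₁
    rw [Function.update_of_ne hx0]
    obtain ⟨m, rfl⟩ : ∃ m', m = m' + 1 := ⟨m - 1, by omega⟩
    have hσ : ymin ^ k ≤ 1 - survival G s (m + 1) (x 1) := by
      have := ih (x := fun i => x (i + 1)) hxk (fun i hi => hx (i + 1) (by omega)) (m := m)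
        (by omega)
      rw [← survival_succ] at this
      linarith
    have hstep : ymin ≤ G (x 0) (x 1) := hymin _ _ (hx 0 (by omega)).ne'
    have hdefect : 1 - (G *ᵥ survival G s (m + 1)) (x 0) =
        ∑ q, G (x 0) q * (1 - survival G s (m + 1) q) := by
      simp only [mul_sub, mul_one, sum_sub_distrib, sum_row_of_mem_rowStochastic hG,
        mulVec_apply_eq_sum]
    have hsingle : G (x 0) (x 1) * (1 - survival G s (m + 1) (x 1)) ≤
        ∑ q, G (x 0) q * (1 - survival G s (m + 1) q) :=
      single_le_sum (f := fun q => G (x 0) q * (1 - survival G s (m + 1) q))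
        (fun q _ => mul_nonneg (nonneg_of_mem_rowStochastic hG)
          (sub_nonneg.2 (survival_le_one hG s _ q))) (mem_univ _)
    have := mul_le_mul hstep hσ (pow_nonneg hy k) (hy.trans hstep)
    rw [pow_succ']
    linarith

theorem sum_survival_le (hG : G ∈ rowStochastic ℝ Q) {s : Q} {ymin : ℝ} (hy : 0 < ymin)
    (hy₁ : ymin ≤ 1) (hymin : ∀ q q', G q q' ≠ 0 → ymin ≤ G q q')
    (hs : ∀ p, Relation.ReflTransGen (fun a b => 0 < G a b) p s) (n : ℕ) (p : Q) :
    ∑ i ∈ range n, survival G s i p ≤ Fintype.card Q / ymin ^ Fintype.card Q := by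
  set c := Fintype.card Q
  have hc : survival G s c ≤ (1 - ymin ^ c) • 1 := fun q => by
    obtain ⟨k, hkc, x, rfl, hxk, hx⟩ := (hs q).exists_path_lt_card
    calc survival G s c (x 0) ≤ 1 - ymin ^ k :=
          survival_le_of_path hG hy.le hy₁ hymin hxk hx hkc
      _ ≤ (1 - ymin ^ c) • (1 : Q → ℝ) (x 0) := by
          simp only [Pi.one_apply, smul_eq_mul, mul_one]
          linarith [pow_le_pow_of_le_one hy.le hy₁ hkc.le]
  refine sum_range_le_div_of_decay (pow_pos hy c) (fun i => survival_nonneg hG s i p)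
    (fun i => survival_le_one hG s i p) (fun i => ?_) n
  calc survival G s (i + c) p ≤ (G.updateRow s 0 ^ i *ᵥ (1 - ymin ^ c) • 1) p := by
        rw [survival_add]
        exact mulVec_mono_of_nonneg (pow_apply_nonneg (updateRow_zero_nonneg hG s) i) hc p
    _ = (1 - ymin ^ c) * survival G s i p := by
        rw [mulVec_smul, survival, Pi.smul_apply, smul_eq_mul]

end Survival

section PartialSum

variable {Q : Type*} [Fintype Q] [DecidableEq Q] {G : Matrix Q Q ℝ}

noncomputable def partialSum (G : Matrix Q Q ℝ) (r : Q → ℝ) (n : ℕ) : Q → ℝ :=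
  ∑ i ∈ range n, G ^ i *ᵥ r

theorem partialSum_succ (r : Q → ℝ) (n : ℕ) :
    partialSum G r (n + 1) = r + G *ᵥ partialSum G r n := by
  rw [partialSum, sum_range_succ', partialSum, mulVec_sum]
  simp only [pow_succ', ← mulVec_mulVec, pow_zero, one_mulVec, add_comm r]

/-- Decomposition by the first visit to `s`: the `i`-th summand at `p` is
`E_p[r(Xᵢ) - (G^(n-1-i) r)(s); X₀, …, Xᵢ ≠ s]`. -/
theorem partialSum_sub_eq (hG : G ∈ rowStochastic ℝ Q) (r : Q → ℝ) (s : Q) (n : ℕ) :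
    partialSum G r n - partialSum G r n s • 1 = ∑ i ∈ range n,
      G.updateRow s 0 ^ i *ᵥ Function.update (r - (G ^ (n - 1 - i) *ᵥ r) s • 1) s 0 := by
  refine eq_sum_pow_mulVec_of_succ _ (x := fun k => partialSum G r k - partialSum G r k s • 1)
    (b := fun j => Function.update (r - (G ^ j *ᵥ r) s • 1) s 0) (by simp [partialSum])
    (fun k => ?_) n
  ext p
  rw [updateRow_mulVec, zero_dotProduct, Pi.add_apply]
  by_cases hp : p = s
  · subst hp; simp
  have hp' : partialSum G r (k + 1) p = r p + (G *ᵥ partialSum G r k) p := by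
    rw [partialSum_succ]; rfl
  have hs' : partialSum G r (k + 1) s = partialSum G r k s + (G ^ k *ᵥ r) s := by
    simp [partialSum, sum_range_succ]
  simp only [Function.update_of_ne hp, mulVec_sub, mulVec_smul,
    one_vecMul_of_mem_rowStochastic hG, Pi.sub_apply, Pi.smul_apply, Pi.one_apply, smul_eq_mul,
    mul_one, hp', hs']
  ring

theorem abs_partialSum_sub_le (hG : G ∈ rowStochastic ℝ Q) (r : Q → ℝ) (s : Q) (n : ℕ)
    (p : Q) : |partialSum G r n p - partialSum G r n s| ≤
      diffnorm r * ∑ i ∈ range n, survival G s i p := by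
  have h := congrFun (partialSum_sub_eq hG r s n) p
  simp only [Pi.sub_apply, Pi.smul_apply, Pi.one_apply, smul_eq_mul, mul_one,
    Finset.sum_apply] at h
  rw [h, mul_sum]
  refine (abs_sum_le_sum_abs _ _).trans (sum_le_sum fun i _ =>
    abs_mulVec_apply_le (pow_apply_nonneg (updateRow_zero_nonneg hG s) i) (fun q => ?_) p)
  by_cases hq : q = s
  · subst hq
    simpa using (abs_nonneg _).trans (abs_sub_le_diffnorm r q q)
  · rw [Function.update_of_ne hq, Pi.sub_apply, Pi.smul_apply, Pi.one_apply, smul_eq_mul,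
      mul_one]
    exact abs_sub_mulVec_le_diffnorm (pow_mem hG _) r s q

end PartialSum

theorem stmt2_general {Q : Type*} [Fintype Q] [DecidableEq Q]
    (G : Matrix Q Q ℝ) (ymin : ℝ) (r : Q → ℝ)
    (hnonneg : ∀ q q', 0 ≤ G q q')
    (hrow : ∀ q, ∑ q', G q q' = 1)
    (hy : 0 < ymin)
    (hymin : ∀ q q', G q q' ≠ 0 → ymin ≤ G q q')
    (hBSCC : ∃ s : Q, ∀ p : Q, Relation.ReflTransGen (fun a b => 0 < G a b) p s) :
    ∀ n : ℕ,
      diffnorm (∑ i ∈ Finset.range n, (G ^ i).mulVec r) ≤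
        (10 * Fintype.card Q / ymin ^ Fintype.card Q) * diffnorm r := by
  obtain ⟨s, hs⟩ := hBSCC
  have : Nonempty Q := ⟨s⟩
  have hG : G ∈ rowStochastic ℝ Q := mem_rowStochastic_iff_sum.2 ⟨hnonneg, hrow⟩
  have hy₁ : ymin ≤ 1 := by
    obtain ⟨q, -, hq⟩ := exists_ne_zero_of_sum_ne_zero ((hrow s).trans_ne one_ne_zero)
    exact (hymin s q hq).trans (le_one_of_mem_rowStochastic hG)
  intro n
  set K : ℝ := Fintype.card Q / ymin ^ Fintype.card Q
  have hclose : ∀ p, |partialSum G r n p - partialSum G r n s| ≤ diffnorm r * K := fun p =>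
    (abs_partialSum_sub_le hG r s n p).trans (mul_le_mul_of_nonneg_left
      (sum_survival_le hG hy hy₁ hymin hs n p) (diffnorm_nonneg r))
  have hDK : 0 ≤ diffnorm r * K := mul_nonneg (diffnorm_nonneg r) (by positivity)
  refine diffnorm_le fun p q => ?_
  calc |partialSum G r n p - partialSum G r n q|
      ≤ |partialSum G r n p - partialSum G r n s| + |partialSum G r n q - partialSum G r n s| :=
        (abs_sub_le _ (partialSum G r n s) _).trans_eq (by rw [abs_sub_comm (partialSum G r n s)])
    _ ≤ 10 * Fintype.card Q / ymin ^ Fintype.card Q * diffnorm r := by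
        have : 10 * Fintype.card Q / ymin ^ Fintype.card Q * diffnorm r = 10 * (diffnorm r * K) :=
          by ring
        linarith [hclose p, hclose q]

/-- Let `G` be a stochastic matrix over a finite set `Q` with a single
BSCC (equivalently: some state `s` is reachable in the graph of `G` from every state),
with smallest nonzero entry `ymin`.  Then for every `n` and every vector `r`,
`|Σ_{i<n} Gⁱ r|_diff ≤ C · |r|_diff` where `C = 10·|Q| / ymin^|Q|`. -/
theorem stmt2 {Q : Type*} [Fintype Q] [Nonempty Q] [DecidableEq Q]
    (G : Matrix Q Q ℝ) (ymin : ℝ) (r : Q → ℝ)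
    (hnonneg : ∀ q q', 0 ≤ G q q')
    (hrow : ∀ q, ∑ q', G q q' = 1)
    (hy : 0 < ymin)
    (hymin : ∀ q q', G q q' ≠ 0 → ymin ≤ G q q')
    (hyatt : ∃ q q', G q q' = ymin)
    (hBSCC : ∃ s : Q, ∀ p : Q, Relation.ReflTransGen (fun a b => 0 < G a b) p s) :
    ∀ n : ℕ,
      diffnorm (∑ i ∈ Finset.range n, (G ^ i).mulVec r) ≤
        (10 * Fintype.card Q / ymin ^ Fintype.card Q) * diffnorm r :=
  stmt2_general G ymin r hnonneg hrow hy hymin hBSCC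
end

section
/- Let R = post*(p(0)) be an infinite set of configurations of a one-counter VASS with control states Q such that R ⊆ pre*(p(0)). For each i ∈ ℕ, let L_i = {q ∈ Q : q(i) ∈ R}. Then there exists τ with 1 ≤ τ ≤ |Q| such that L_i ⊆ L_{i+τ} for every i ∈ ℕ, and L_i = L_{i+τ} for every i ≥ |Q|². -/
/-!
A path from `p(0)` to a high configuration `q(n)` passes through every lower level; record for
each level `k` the state of its *last* visit. After that visit the path stays at level `≥ k`, so
it can be shifted down. Pigeonhole on the last-visit states at levels `0, …, |Q|` yields levels
`a < b` with the same state `r`; going back from `r(a)` to `p(0)` and shifting by `b - a` gives a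
pump `p(0) →* p(τ)` with `1 ≤ τ ≤ |Q|`, which yields `L i ⊆ L (i + τ)`. For the converse at
`i ≥ |Q|²`, pigeonhole on the pairs (last-visit state, level mod `τ`) at levels `0, …, |Q|²` yields
`a < b` with `τ ∣ b - a`; cutting out the loop between the two last visits and re-pumping
`(b - a)/τ - 1` times removes exactly `τ` from the counter.
-/

/-- One step of a one-counter VASS with rules `δ` (rule `δ p κ q` moves from control
state `p` to `q` changing the counter by `κ`; decrements are only enabled at positive
counter values, which is automatic since counters live in `ℕ`). -/
def OCStep {Q : Type*} (δ : Q → ℤ → Q → Prop) (c c' : Q × ℕ) : Prop :=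
  ∃ κ : ℤ, δ c.1 κ c'.1 ∧ (c'.2 : ℤ) = (c.2 : ℤ) + κ

/-- Reachability in a one-counter VASS. -/
def OCReach {Q : Type*} (δ : Q → ℤ → Q → Prop) : Q × ℕ → Q × ℕ → Prop :=
  Relation.ReflTransGen (OCStep δ)

open Relation

section Pigeonhole

variable {Q : Type*} [Fintype Q]

theorem exists_lt_map_eq_dvd_sub (f : ℕ → Q) {τ N : ℕ} (hτ : 0 < τ)
    (hN : Fintype.card Q * τ ≤ N) :
    ∃ a b, a < b ∧ b ≤ N ∧ f a = f b ∧ τ ∣ b - a := by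
  let g : Fin (N + 1) → Q × Fin τ := fun k => (f k, ⟨k % τ, Nat.mod_lt _ hτ⟩)
  obtain ⟨x, y, hxy, hg⟩ := Fintype.exists_ne_map_eq_of_card_lt g (by simp only [Fintype.card_prod, Fintype.card_fin]; omega)
  simp only [g, Prod.mk.injEq, Fin.mk.injEq] at hg
  rcases Nat.lt_or_gt_of_ne (Fin.val_ne_of_ne hxy) with hlt | hlt
  · exact ⟨x, y, hlt, by omega, hg.1, (Nat.modEq_iff_dvd' hlt.le).mp hg.2⟩
  · exact ⟨y, x, hlt, by omega, hg.1.symm, (Nat.modEq_iff_dvd' hlt.le).mp hg.2.symm⟩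

theorem Set.Infinite.exists_le_snd {S : Set (Q × ℕ)} (hS : S.Infinite) (N : ℕ) :
    ∃ c ∈ S, N ≤ c.2 := by
  by_contra! h
  exact hS ((Set.finite_univ.prod (Set.finite_Iio N)).subset fun c hc => ⟨trivial, h c hc⟩)

end Pigeonhole

section Reachability

variable {Q : Type*} {δ : Q → ℤ → Q → Prop}

theorem OCStep.shift (s : ℕ) {c c' : Q × ℕ} (h : OCStep δ c c') :
    OCStep δ (c.1, c.2 + s) (c'.1, c'.2 + s) := by
  obtain ⟨κ, hδ, hκ⟩ := h
  exact ⟨κ, hδ, by push_cast; omega⟩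

theorem OCReach.shift (s : ℕ) {c c' : Q × ℕ} (h : OCReach δ c c') :
    OCReach δ (c.1, c.2 + s) (c'.1, c'.2 + s) := by
  induction h with
  | refl => exact .refl
  | tail _ hstep ih => exact ih.tail (hstep.shift s)

variable (δ) in
def OCStepAbove (d : ℕ) (c c' : Q × ℕ) : Prop :=
  OCStep δ c c' ∧ d ≤ c.2 ∧ d ≤ c'.2

theorem OCStepAbove.mono {d e : ℕ} (hde : d ≤ e) {c c' : Q × ℕ} (h : OCStepAbove δ e c c') :
    OCStepAbove δ d c c' :=
  ⟨h.1, hde.trans h.2.1, hde.trans h.2.2⟩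

theorem OCStepAbove.shift_down {d : ℕ} {c c' : Q × ℕ} (h : OCStepAbove δ d c c') :
    OCStep δ (c.1, c.2 - d) (c'.1, c'.2 - d) := by
  obtain ⟨⟨κ, hδ, hκ⟩, hd, hd'⟩ := h
  exact ⟨κ, hδ, by push_cast [hd, hd']; omega⟩

theorem ocReach_sub_of_above {d : ℕ} {c c' : Q × ℕ} (h : ReflTransGen (OCStepAbove δ d) c c') :
    OCReach δ (c.1, c.2 - d) (c'.1, c'.2 - d) := by
  induction h with
  | refl => exact .refl
  | tail _ hstep ih => exact ih.tail hstep.shift_down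

theorem OCReach.trans_above {c₀ c : Q × ℕ} {r : Q} {a b : ℕ} (hab : a ≤ b)
    (h₁ : OCReach δ c₀ (r, a)) (h₂ : ReflTransGen (OCStepAbove δ b) (r, b) c) :
    OCReach δ c₀ (c.1, c.2 - (b - a)) := by
  have h := ocReach_sub_of_above
    (ReflTransGen.mono (fun _ _ => OCStepAbove.mono (Nat.sub_le b a)) _ _ h₂)
  rw [show b - (b - a) = a by omega] at h
  exact h₁.trans h

theorem OCReach.exists_lastVisit (hκ : ∀ a k b, δ a k b → k = -1 ∨ k = 0 ∨ k = 1)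
    {s : Q} {m : ℕ} {c : Q × ℕ} (h : OCReach δ (s, m) c) {k : ℕ} (hmk : m ≤ k) (hkc : k ≤ c.2) :
    ∃ r : Q, OCReach δ (s, m) (r, k) ∧ ReflTransGen (OCStepAbove δ k) (r, k) c := by
  induction h generalizing k with
  | refl =>
    obtain rfl : k = m := le_antisymm hkc hmk
    exact ⟨s, .refl, .refl⟩
  | @tail c' c'' hpath hstep ih =>
    by_cases hk : k ≤ c'.2
    · obtain ⟨r, hr, habove⟩ := ih hmk hk
      exact ⟨r, hr, habove.tail ⟨hstep, hk, hkc⟩⟩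
    · obtain rfl : k = c''.2 := by
        obtain ⟨κ, hδ, he⟩ := hstep
        rcases hκ _ _ _ hδ with rfl | rfl | rfl <;> omega
      exact ⟨c''.1, hpath.tail hstep, .refl⟩

variable {p : Q}

theorem OCReach.add_pump {q : Q} {i τ : ℕ} (h : OCReach δ (p, 0) (q, i))
    (hτ : OCReach δ (p, 0) (p, τ)) : OCReach δ (p, 0) (q, i + τ) := by
  have h' := h.shift τ
  rw [zero_add] at h'
  exact hτ.trans h'

theorem OCReach.add_mul_pump {q : Q} {i τ : ℕ} (h : OCReach δ (p, 0) (q, i))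
    (hτ : OCReach δ (p, 0) (p, τ)) (k : ℕ) : OCReach δ (p, 0) (q, i + k * τ) := by
  induction k with
  | zero => simpa using h
  | succ k ih => simpa [add_mul, add_assoc] using ih.add_pump hτ

end Reachability

section Pumping

variable {Q : Type*} [Fintype Q] {δ : Q → ℤ → Q → Prop} {p : Q}

theorem exists_pump_le_card (hκ : ∀ a k b, δ a k b → k = -1 ∨ k = 0 ∨ k = 1)
    (hinf : {c : Q × ℕ | OCReach δ (p, 0) c}.Infinite)
    (hback : ∀ c : Q × ℕ, OCReach δ (p, 0) c → OCReach δ c (p, 0)) :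
    ∃ τ, 1 ≤ τ ∧ τ ≤ Fintype.card Q ∧ OCReach δ (p, 0) (p, τ) := by
  obtain ⟨c, hc, hcN⟩ := hinf.exists_le_snd (Fintype.card Q)
  have hlevel : ∀ k ≤ Fintype.card Q, ∃ r, OCReach δ (p, 0) (r, k) := fun k hk =>
    (OCReach.exists_lastVisit hκ hc k.zero_le (hk.trans hcN)).imp fun _ h => h.1
  have : Nonempty Q := ⟨p⟩
  choose! f hf using hlevel
  obtain ⟨a, b, hab, hbN, hfab, -⟩ := exists_lt_map_eq_dvd_sub f one_pos (mul_one _).le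
  refine ⟨b - a, by omega, by omega, ?_⟩
  have hreturn := (hback _ (hf a (hab.le.trans hbN))).shift (b - a)
  rw [Nat.add_sub_cancel' hab.le, zero_add] at hreturn
  exact (hfab ▸ hf b hbN).trans hreturn

theorem OCReach.of_add_pump (hκ : ∀ a k b, δ a k b → k = -1 ∨ k = 0 ∨ k = 1) {τ : ℕ}
    (hτ : OCReach δ (p, 0) (p, τ)) (hτ0 : 0 < τ) (hτQ : τ ≤ Fintype.card Q) {q : Q} {n : ℕ}
    (hn : Fintype.card Q ^ 2 ≤ n) (h : OCReach δ (p, 0) (q, n + τ)) : OCReach δ (p, 0) (q, n) := by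
  have hlevel : ∀ k ≤ Fintype.card Q ^ 2, ∃ r, OCReach δ (p, 0) (r, k) ∧
      ReflTransGen (OCStepAbove δ k) (r, k) (q, n + τ) := fun k hk =>
    h.exists_lastVisit hκ k.zero_le (by simp only; omega)
  have : Nonempty Q := ⟨p⟩
  choose! f hreach habove using hlevel
  obtain ⟨a, b, hab, hbN, hfab, j, hj⟩ :=
    exists_lt_map_eq_dvd_sub (N := Fintype.card Q ^ 2) f hτ0
      (by rw [sq]; exact Nat.mul_le_mul_left _ hτQ)
  have hcut := (hreach a (by omega)).trans_above hab.le (hfab ▸ habove b hbN)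
  obtain ⟨k, rfl⟩ : ∃ k, j = k + 1 := Nat.exists_eq_succ_of_ne_zero (by rintro rfl; omega)
  convert hcut.add_mul_pump hτ k using 2
  have hloop : b - a = k * τ + τ := by rw [hj]; ring
  dsimp only
  omega

end Pumping

/-- Let `R = post*(p(0))` be infinite with `R ⊆ pre*(p(0))`, and let
`L i = {q | q(i) ∈ R}`.  Then there is `τ` with `1 ≤ τ ≤ |Q|` such that
`L i ⊆ L (i+τ)` for all `i`, and `L i = L (i+τ)` for all `i ≥ |Q|²`. -/
theorem stmt7 {Q : Type*} [Fintype Q] (δ : Q → ℤ → Q → Prop) (p : Q)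
    (hκ : ∀ a k b, δ a k b → k = -1 ∨ k = 0 ∨ k = 1)
    (hinf : {c : Q × ℕ | OCReach δ (p, 0) c}.Infinite)
    (hback : ∀ c : Q × ℕ, OCReach δ (p, 0) c → OCReach δ c (p, 0)) :
    ∃ τ : ℕ, 1 ≤ τ ∧ τ ≤ Fintype.card Q ∧
      (∀ i : ℕ, {q : Q | OCReach δ (p, 0) (q, i)} ⊆ {q : Q | OCReach δ (p, 0) (q, i + τ)}) ∧
      (∀ i : ℕ, Fintype.card Q ^ 2 ≤ i →
        {q : Q | OCReach δ (p, 0) (q, i)} = {q : Q | OCReach δ (p, 0) (q, i + τ)}) := by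
  obtain ⟨τ, hτ1, hτQ, hτ⟩ := exists_pump_le_card hκ hinf hback
  have hsubset (i : ℕ) : {q : Q | OCReach δ (p, 0) (q, i)} ⊆ {q | OCReach δ (p, 0) (q, i + τ)} :=
    fun _ hq => OCReach.add_pump hq hτ
  exact ⟨τ, hτ1, hτQ, hsubset, fun i hi =>
    (hsubset i).antisymm fun _ hq => OCReach.of_add_pump hκ hτ hτ1 hτQ hi hq⟩
end

section
/- In a one-counter VASS with control state set Q, if a configuration q(ℓ) can reach some configuration with zero counter, then it can reach a configuration with zero counter by a path of length at most ℓ·|Q| + |Q|². -/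
/-- Reachability by a path of at most `n` transitions. -/
def OCReachIn {Q : Type*} (δ : Q → ℤ → Q → Prop) (n : ℕ) (c c' : Q × ℕ) : Prop :=
  ∃ m ≤ n, ∃ w : ℕ → Q × ℕ, w 0 = c ∧ w m = c' ∧ ∀ i < m, OCStep δ (w i) (w (i + 1))

/-!
Take a shortest path from `q(ℓ)` to a configuration with zero counter. If it visited two
configurations `p(a)` and `p(b)` with `a ≤ b`, `p(a)` first, one could jump from `p(a)` to
`p(b)` and run the rest of the path `b - a` lower, stopping as soon as it reaches zero: a
shorter path. So its configurations are pairwise distinct, and its counter stays below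
`ℓ + |Q|`, since otherwise the first visits to the `|Q| + 1` levels `ℓ, …, ℓ + |Q|` would
repeat a state. Hence it has at most `|Q| (ℓ + |Q|)` configurations.
-/

namespace OneCounter

section Paths

variable {α : Type*}

def IsPath (R : α → α → Prop) (m : ℕ) (w : ℕ → α) : Prop :=
  ∀ i < m, R (w i) (w (i + 1))

variable {R : α → α → Prop}

theorem exists_isPath_of_reflTransGen {a b : α} (h : Relation.ReflTransGen R a b) :
    ∃ m w, w 0 = a ∧ w m = b ∧ IsPath R m w := by
  induction h with
  | refl => exact ⟨0, fun _ => a, rfl, rfl, fun i hi => absurd hi (Nat.not_lt_zero i)⟩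
  | @tail c d _ hcd ih =>
    obtain ⟨m, w, h0, hm, hw⟩ := ih
    refine ⟨m + 1, Function.update w (m + 1) d, by simp [h0], by simp, fun i hi => ?_⟩
    rcases Nat.lt_succ_iff_lt_or_eq.mp hi with hi | rfl
    · simpa [Function.update_of_ne (by omega : i ≠ m + 1),
        Function.update_of_ne (by omega : i + 1 ≠ m + 1)] using hw i hi
    · simpa [hm] using hcd

def pathAppend (a : ℕ) (v w : ℕ → α) : ℕ → α :=
  fun i => if i ≤ a then v i else w (i - a)

variable {a b : ℕ} {v w : ℕ → α}

theorem pathAppend_zero : pathAppend a v w 0 = v 0 := if_pos (Nat.zero_le a)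

theorem pathAppend_add (h : v a = w 0) (i : ℕ) : pathAppend a v w (a + i) = w i := by
  unfold pathAppend
  split_ifs with hi
  · obtain rfl : i = 0 := by omega
    simpa using h
  · congr 1
    omega

theorem IsPath.append (hv : IsPath R a v) (hw : IsPath R b w) (h : v a = w 0) :
    IsPath R (a + b) (pathAppend a v w) := by
  intro i hi
  rcases lt_or_ge i a with hia | hia
  · simpa [pathAppend, hia.le, Nat.succ_le_of_lt hia] using hv i hia
  · obtain ⟨k, rfl⟩ := Nat.exists_eq_add_of_le hia
    rw [add_assoc, pathAppend_add h, pathAppend_add h]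
    exact hw k (by omega)

theorem IsPath.shift {m i n : ℕ} (hw : IsPath R m w) (h : i + n ≤ m) :
    IsPath R n (fun k => w (i + k)) :=
  fun k hk => hw (i + k) (by omega)

end Paths

theorem exists_first_eq_of_le_add_one {f : ℕ → ℤ} {m : ℕ} {c : ℤ}
    (hf : ∀ i < m, f (i + 1) ≤ f i + 1) (h0 : f 0 ≤ c) (hm : c ≤ f m) :
    ∃ i ≤ m, f i = c ∧ ∀ k < i, f k < c := by
  classical
  have hex : ∃ i, c ≤ f i := ⟨m, hm⟩
  have hlt : ∀ k < Nat.find hex, f k < c := fun k hk => lt_of_not_ge (Nat.find_min hex hk)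
  have him : Nat.find hex ≤ m := Nat.find_min' hex hm
  refine ⟨Nat.find hex, him, le_antisymm ?_ (Nat.find_spec hex), hlt⟩
  obtain h | h := Nat.eq_zero_or_pos (Nat.find hex)
  · rwa [h]
  · have hstep := hf (Nat.find hex - 1) (by omega)
    rw [Nat.sub_add_cancel h] at hstep
    linarith [hlt (Nat.find hex - 1) (by omega)]

variable {Q : Type*} {δ : Q → ℤ → Q → Prop}

section Steps

variable (hκ : ∀ a k b, δ a k b → k = -1 ∨ k = 0 ∨ k = 1) {c c' : Q × ℕ}
include hκ

theorem OCStep.snd_le_add_one (h : OCStep δ c c') : c'.2 ≤ c.2 + 1 := by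
  obtain ⟨κ, hδ, hc⟩ := h
  rcases hκ _ _ _ hδ with rfl | rfl | rfl <;> omega

theorem OCStep.le_snd_add_one (h : OCStep δ c c') : c.2 ≤ c'.2 + 1 := by
  obtain ⟨κ, hδ, hc⟩ := h
  rcases hκ _ _ _ hδ with rfl | rfl | rfl <;> omega

end Steps

theorem OCStep.sub_snd {c c' : Q × ℕ} (h : OCStep δ c c') {d : ℕ} (hc : d ≤ c.2)
    (hc' : d ≤ c'.2) : OCStep δ (c.1, c.2 - d) (c'.1, c'.2 - d) := by
  obtain ⟨κ, hδ, hκ⟩ := h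
  exact ⟨κ, hδ, by simp only [Nat.cast_sub hc, Nat.cast_sub hc']; omega⟩

def HasZeroPath (δ : Q → ℤ → Q → Prop) (c : Q × ℕ) (m : ℕ) : Prop :=
  ∃ w, w 0 = c ∧ (w m).2 = 0 ∧ IsPath (OCStep δ) m w

section ShortestPath

variable (hκ : ∀ a k b, δ a k b → k = -1 ∨ k = 0 ∨ k = 1) {m : ℕ} {w : ℕ → Q × ℕ}
  (hw : IsPath (OCStep δ) m w) (hend : (w m).2 = 0)
include hκ hw hend

theorem exists_shorter_hasZeroPath {i i' : ℕ} (hii' : i < i') (hi'm : i' ≤ m)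
    (hstate : (w i).1 = (w i').1) (hle : (w i).2 ≤ (w i').2) :
    ∃ m' < m, HasZeroPath δ (w 0) m' := by
  set d := (w i').2 - (w i).2
  obtain ⟨j, hjm, hjd, hgt⟩ := exists_first_eq_of_le_add_one
    (f := fun k => -((w (i' + k)).2 : ℤ)) (m := m - i') (c := -(d : ℤ))
    (fun k hk => by
      have := OCStep.le_snd_add_one hκ (hw (i' + k) (by omega))
      rw [← add_assoc]
      omega)
    (by simp only [add_zero]; omega) (by simp [Nat.add_sub_cancel' hi'm, hend])
  have hge : ∀ k ≤ j, d ≤ (w (i' + k)).2 := fun k hk => by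
    rcases hk.lt_or_eq with hk | rfl
    · have := hgt k hk; omega
    · omega
  set v : ℕ → Q × ℕ := fun k => ((w (i' + k)).1, (w (i' + k)).2 - d)
  have hv : IsPath (OCStep δ) j v := fun k hk =>
    OCStep.sub_snd (hw.shift (by omega : i' + j ≤ m) k hk) (hge k hk.le) (hge (k + 1) hk)
  have hjoin : w i = v 0 := Prod.ext hstate (by simp only [v, add_zero]; omega)
  refine ⟨i + j, by omega, pathAppend i w v, pathAppend_zero, ?_,
    IsPath.append (fun k hk => hw k (by omega)) hv hjoin⟩
  rw [pathAppend_add hjoin]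
  simp only [v]
  omega

variable (hmin : ∀ m' < m, ¬ HasZeroPath δ (w 0) m')
include hmin

theorem injOn_of_forall_not_hasZeroPath : Set.InjOn w (Set.Iic m) := by
  intro i hi i' hi' h
  by_contra hne
  wlog hlt : i < i' generalizing i i'
  · exact this hi' hi h.symm (Ne.symm hne) (by omega)
  obtain ⟨m', hm', hp⟩ := exists_shorter_hasZeroPath hκ hw hend hlt hi'
    (congrArg Prod.fst h) (congrArg Prod.snd h).le
  exact hmin m' hm' hp

theorem snd_lt_of_forall_not_hasZeroPath [Fintype Q] {i : ℕ} (hi : i ≤ m) :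
    (w i).2 < (w 0).2 + Fintype.card Q := by
  by_contra! hbig
  set ℓ := (w 0).2
  have hfirst : ∀ c ∈ Finset.Icc ℓ (ℓ + Fintype.card Q),
      ∃ t ≤ i, (w t).2 = c ∧ ∀ k < t, (w k).2 < c := by
    intro c hc
    rw [Finset.mem_Icc] at hc
    obtain ⟨t, hti, ht, hlt⟩ := exists_first_eq_of_le_add_one
      (f := fun k => ((w k).2 : ℤ)) (m := i) (c := c)
      (fun k hk => by exact_mod_cast OCStep.snd_le_add_one hκ (hw k (by omega)))
      (by simp only [Nat.cast_le]; omega) (by simp only [Nat.cast_le]; omega)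
    exact ⟨t, hti, by exact_mod_cast ht, fun k hk => by exact_mod_cast hlt k hk⟩
  choose! u hui hu hbefore using hfirst
  have hcard : (Finset.univ : Finset Q).card < (Finset.Icc ℓ (ℓ + Fintype.card Q)).card := by
    simp only [Finset.card_univ, Nat.card_Icc]
    omega
  obtain ⟨c, hc, c', hc', hne, hstate⟩ := Finset.exists_ne_map_eq_of_card_lt_of_maps_to hcard
    (f := fun c => (w (u c)).1) (fun _ _ => Finset.mem_coe.2 (Finset.mem_univ _))
  wlog hlt : c < c' generalizing c c'
  · exact this c' hc' c hc hne.symm hstate.symm (by omega)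
  have huu : u c < u c' := by
    refine lt_of_le_of_ne (le_of_not_gt fun h => ?_) fun h => ?_
    · have := hbefore c hc (u c') h
      rw [hu c' hc'] at this
      omega
    · have := hu c hc
      rw [h, hu c' hc'] at this
      omega
  obtain ⟨m', hm', hp⟩ := exists_shorter_hasZeroPath hκ hw hend huu ((hui c' hc').trans hi)
    hstate (by rw [hu c hc, hu c' hc']; exact hlt.le)
  exact hmin m' hm' hp

end ShortestPath

end OneCounter

open OneCounter in
/-- In a one-counter VASS, if `q(ℓ)` can reach some configuration with
zero counter, then it can do so by a path of length at most `ℓ·|Q| + |Q|²`. -/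
theorem stmt9 {Q : Type*} [Fintype Q] (δ : Q → ℤ → Q → Prop)
    (hκ : ∀ a k b, δ a k b → k = -1 ∨ k = 0 ∨ k = 1)
    (q : Q) (ℓ : ℕ) (h : ∃ r : Q, OCReach δ (q, ℓ) (r, 0)) :
    ∃ r : Q, OCReachIn δ (ℓ * Fintype.card Q + Fintype.card Q ^ 2) (q, ℓ) (r, 0) := by
  classical
  obtain ⟨r, hr⟩ := h
  obtain ⟨m₀, w₀, h0, hend, hw₀⟩ := exists_isPath_of_reflTransGen hr
  have hex : ∃ m, HasZeroPath δ (q, ℓ) m := ⟨m₀, w₀, h0, by rw [hend], hw₀⟩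
  obtain ⟨m, ⟨w, hw0, hwend, hw⟩, hmin⟩ :
      ∃ m, HasZeroPath δ (q, ℓ) m ∧ ∀ m' < m, ¬ HasZeroPath δ (q, ℓ) m' :=
    ⟨Nat.find hex, Nat.find_spec hex, fun _ => Nat.find_min hex⟩
  rw [← hw0] at hmin
  have hmaps : Set.MapsTo w ↑(Finset.Iic m)
      ↑(Finset.univ ×ˢ Finset.range (ℓ + Fintype.card Q) : Finset (Q × ℕ)) := by
    intro i hi
    simpa [hw0] using snd_lt_of_forall_not_hasZeroPath hκ hw hwend hmin (Finset.mem_Iic.1 hi)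
  have hcard := Finset.card_le_card_of_injOn w hmaps
    (by rw [Finset.coe_Iic]; exact injOn_of_forall_not_hasZeroPath hκ hw hwend hmin)
  simp only [Nat.card_Iic, Finset.card_product, Finset.card_univ, Finset.card_range] at hcard
  refine ⟨(w m).1, m, ?_, w, hw0, Prod.ext rfl hwend, hw⟩
  linarith [show Fintype.card Q * (ℓ + Fintype.card Q) =
    ℓ * Fintype.card Q + Fintype.card Q ^ 2 by ring]
end

section
/- In a one-counter VASS with control state set Q, if there is a path from s(0) to t(0), then there is such a path of length at most |Q|³ + |Q|. -/
/-!
Take a shortest run from `s(0)` to `t(0)`. It visits no configuration twice, since the loop between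
two visits could be cut out. Its counter stays at most `|Q|²`: if it exceeded `|Q|²` at time `p`,
then for every level `j ≤ |Q|²` let `a_j` be the last time before `p` and `b_j` the first time after
`p` at which the counter equals `j`. By pigeonhole two levels `j < j'` carry the same pair of states
at `(a_j, b_j)` and `(a_j', b_j')`, and replacing the run between `a_j` and `b_j` by the run between
`a_j'` and `b_j'`, lowered by `j' - j`, gives a shorter run. So the run has at most `|Q| (|Q|² + 1)`
configurations.
-/

section Excursion

structure IsExcursion (f : ℕ → ℕ) (j a b : ℕ) : Prop where
  left : f a = j
  right : f b = j
  above : ∀ i, a < i → i < b → j < f i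

lemma exists_last_eq_before (f : ℕ → ℕ) {j p : ℕ} (hstep : ∀ i < p, f (i + 1) ≤ f i + 1)
    (h0 : f 0 ≤ j) (hp : j < f p) : ∃ a < p, f a = j ∧ ∀ i, a < i → i ≤ p → j < f i := by
  induction p with
  | zero => omega
  | succ p ih =>
    by_cases hfp : f p ≤ j
    · have := hstep p p.lt_succ_self
      exact ⟨p, p.lt_succ_self, by omega, fun i hi hip => by rwa [show i = p + 1 by omega]⟩
    · obtain ⟨a, hap, hfa, habove⟩ := ih (fun i hi => hstep i (by omega)) (by omega)
      refine ⟨a, by omega, hfa, fun i hai hip => ?_⟩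
      rcases hip.lt_or_eq with hip | rfl
      exacts [habove i hai (Nat.lt_succ_iff.mp hip), hp]

lemma exists_excursion (f : ℕ → ℕ) {j m p : ℕ}
    (hstep : ∀ i < m, f (i + 1) ≤ f i + 1 ∧ f i ≤ f (i + 1) + 1)
    (h0 : f 0 ≤ j) (hm : f m ≤ j) (hpm : p ≤ m) (hp : j < f p) :
    ∃ a b, a < p ∧ p < b ∧ b ≤ m ∧ IsExcursion f j a b := by
  obtain ⟨a, hap, hfa, habove⟩ :=
    exists_last_eq_before f (fun i hi => (hstep i (by omega)).1) h0 hp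
  -- the first return to level `j` after `p` is the last one before `m - p` for the reversed function
  obtain ⟨b, hbp, hfb, hbelow⟩ := exists_last_eq_before (fun i => f (m - i)) (p := m - p)
    (fun i hi => by
      simpa [show m - i = m - (i + 1) + 1 by omega] using (hstep (m - (i + 1)) (by omega)).2)
    (by simpa using hm) (by simpa [Nat.sub_sub_self hpm] using hp)
  refine ⟨a, m - b, hap, by omega, by omega, hfa, hfb, fun i hai hib => ?_⟩
  rcases le_or_gt i p with hip | hpi
  · exact habove i hai hip
  · simpa [Nat.sub_sub_self (show i ≤ m by omega)] using hbelow (m - i) (by omega) (by omega)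

lemma IsExcursion.nested {f : ℕ → ℕ} {j j' a b a' b' : ℕ} (h : IsExcursion f j a b)
    (h' : IsExcursion f j' a' b') (hjj' : j < j') (ha'b : a' < b) (hab' : a < b') :
    a < a' ∧ b' < b := by
  constructor
  · by_contra! ha'a
    rcases ha'a.lt_or_eq with ha'a | rfl
    · have := h'.above a ha'a hab'
      have := h.left
      omega
    · have := h.left
      have := h'.left
      omega
  · by_contra! hbb'
    rcases hbb'.lt_or_eq with hbb' | rfl
    · have := h'.above b ha'b hbb'
      have := h.right
      omega
    · have := h.right
      have := h'.right
      omega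

lemma IsExcursion.le {f : ℕ → ℕ} {j a b : ℕ} (h : IsExcursion f j a b) (i : ℕ) (hai : a ≤ i)
    (hib : i ≤ b) : j ≤ f i := by
  rcases hai.lt_or_eq with hai | rfl
  · rcases hib.lt_or_eq with hib | rfl
    exacts [(h.above i hai hib).le, h.right.ge]
  · exact h.left.ge

end Excursion

section Runs

variable {Q : Type*} {δ : Q → ℤ → Q → Prop}

def OCRun (δ : Q → ℤ → Q → Prop) (n : ℕ) (w : ℕ → Q × ℕ) : Prop :=
  ∀ i < n, OCStep δ (w i) (w (i + 1))

def OCReachExactly (δ : Q → ℤ → Q → Prop) (n : ℕ) (c c' : Q × ℕ) : Prop :=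
  ∃ w : ℕ → Q × ℕ, w 0 = c ∧ w n = c' ∧ OCRun δ n w

lemma OCReachExactly.single {c c' : Q × ℕ} (h : OCStep δ c c') : OCReachExactly δ 1 c c' :=
  ⟨fun i => if i = 0 then c else c', rfl, rfl, fun i hi => by
    obtain rfl : i = 0 := by omega
    simpa using h⟩

lemma OCReachExactly.trans {m n : ℕ} {c d e : Q × ℕ} (h₁ : OCReachExactly δ m c d)
    (h₂ : OCReachExactly δ n d e) : OCReachExactly δ (m + n) c e := by
  obtain ⟨u, hu0, hum, hu⟩ := h₁
  obtain ⟨v, hv0, hvn, hv⟩ := h₂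
  refine ⟨fun i => if i < m then u i else v (i - m), ?_, by simpa using hvn, fun i hi => ?_⟩
  · rcases Nat.eq_zero_or_pos m with rfl | hm
    · simp [hv0, ← hum, hu0]
    · simp [hm, hu0]
  · rcases lt_trichotomy (i + 1) m with hi1 | hi1 | hi1
    · simpa [hi1, show i < m by omega] using hu i (by omega)
    · simpa [hi1, show i < m by omega, hv0, ← hum] using hu i (by omega)
    · simpa [show ¬ i < m by omega, show ¬ i + 1 < m by omega, show i + 1 - m = i - m + 1 by omega]
        using hv (i - m) (by omega)

lemma OCReach.exists_reachExactly {c c' : Q × ℕ} (h : OCReach δ c c') :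
    ∃ n, OCReachExactly δ n c c' := by
  induction h with
  | refl => exact ⟨0, fun _ => c, rfl, rfl, fun i hi => absurd hi (Nat.not_lt_zero i)⟩
  | tail _ hstep ih =>
    obtain ⟨n, hn⟩ := ih
    exact ⟨n + 1, hn.trans (.single hstep)⟩

namespace OCRun

variable {m : ℕ} {w : ℕ → Q × ℕ}

lemma reachExactly_sub (hw : OCRun δ m w) {i j d : ℕ} (hij : i ≤ j) (hjm : j ≤ m)
    (hd : ∀ k, i ≤ k → k ≤ j → d ≤ (w k).2) :
    OCReachExactly δ (j - i) ((w i).1, (w i).2 - d) ((w j).1, (w j).2 - d) := by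
  refine ⟨fun k => ((w (k + i)).1, (w (k + i)).2 - d), by simp, by simp [Nat.sub_add_cancel hij],
    fun k hk => ?_⟩
  obtain ⟨κ, hδ, hcounter⟩ := hw (k + i) (by omega)
  have hk₀ := hd (k + i) (by omega) (by omega)
  have hk₁ := hd (k + i + 1) (by omega) (by omega)
  refine ⟨κ, by simpa [Nat.add_right_comm] using hδ, ?_⟩
  simp only [Nat.add_right_comm k 1 i]
  push_cast [hk₀, hk₁]
  omega

lemma reachExactly (hw : OCRun δ m w) {i j : ℕ} (hij : i ≤ j) (hjm : j ≤ m) :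
    OCReachExactly δ (j - i) (w i) (w j) := by
  simpa using hw.reachExactly_sub (d := 0) hij hjm fun _ _ _ => Nat.zero_le _

lemma counter_step (hκ : ∀ a k b, δ a k b → k = -1 ∨ k = 0 ∨ k = 1) (hw : OCRun δ m w) :
    ∀ i < m, (w (i + 1)).2 ≤ (w i).2 + 1 ∧ (w i).2 ≤ (w (i + 1)).2 + 1 := by
  intro i hi
  obtain ⟨κ, hδ, hcounter⟩ := hw i hi
  rcases hκ _ _ _ hδ with rfl | rfl | rfl <;> omega

lemma injOn_of_minimal (hw : OCRun δ m w) (hmin : ∀ n < m, ¬ OCReachExactly δ n (w 0) (w m)) :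
    Set.InjOn w (Set.Iic m) := by
  intro i hi j hj hij
  by_contra hne
  wlog hlt : i < j generalizing i j
  · exact this hj hi hij.symm (Ne.symm hne) (by omega)
  have hjm : j ≤ m := hj
  exact hmin (i + (m - j)) (by omega)
    ((hw.reachExactly (Nat.zero_le i) (by omega)).trans
      (hij ▸ hw.reachExactly hj le_rfl))

lemma length_succ_le_of_minimal [Fintype Q] (hw : OCRun δ m w)
    (hmin : ∀ n < m, ¬ OCReachExactly δ n (w 0) (w m)) {B : ℕ} (hB : ∀ p ≤ m, (w p).2 ≤ B) :
    m + 1 ≤ Fintype.card Q * (B + 1) := by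
  classical
  calc m + 1 = ((Finset.range (m + 1)).image w).card := by
        rw [Finset.card_image_of_injOn, Finset.card_range]
        intro i hi j hj
        simp only [Finset.coe_range, Set.mem_Iio] at hi hj
        exact hw.injOn_of_minimal hmin (Nat.lt_succ_iff.mp hi) (Nat.lt_succ_iff.mp hj)
    _ ≤ ((Finset.univ : Finset Q) ×ˢ Finset.range (B + 1)).card := by
        refine Finset.card_le_card fun c hc => ?_
        obtain ⟨p, hp, rfl⟩ := Finset.mem_image.mp hc
        simpa [Nat.lt_succ_iff] using hB p (by simpa [Nat.lt_succ_iff] using hp)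
    _ = Fintype.card Q * (B + 1) := by simp

lemma counter_le_of_minimal [Fintype Q] (hκ : ∀ a k b, δ a k b → k = -1 ∨ k = 0 ∨ k = 1)
    (hw : OCRun δ m w) (hmin : ∀ n < m, ¬ OCReachExactly δ n (w 0) (w m)) {L : ℕ}
    (h0 : (w 0).2 ≤ L) (hm : (w m).2 ≤ L) {p : ℕ} (hpm : p ≤ m) :
    (w p).2 ≤ L + Fintype.card Q ^ 2 := by
  by_contra! hp
  have hexc : ∀ j ∈ Finset.Icc L (L + Fintype.card Q ^ 2), ∃ ab : ℕ × ℕ,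
      ab.1 < p ∧ p < ab.2 ∧ ab.2 ≤ m ∧ IsExcursion (fun i => (w i).2) j ab.1 ab.2 := by
    intro j hj
    rw [Finset.mem_Icc] at hj
    obtain ⟨a, b, h⟩ := exists_excursion (fun i => (w i).2) (j := j) (hw.counter_step hκ)
      (by omega) (by omega) hpm (by omega)
    exact ⟨(a, b), h⟩
  choose! ab hab using hexc
  have hcard : (Finset.univ : Finset (Q × Q)).card <
      (Finset.Icc L (L + Fintype.card Q ^ 2)).card := by
    simp only [Finset.card_univ, Fintype.card_prod, Nat.card_Icc, sq]
    omega
  obtain ⟨j, hj, j', hj', hne, hstates⟩ := Finset.exists_ne_map_eq_of_card_lt_of_maps_to hcard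
    (f := fun j => ((w (ab j).1).1, (w (ab j).2).1))
    fun _ _ => Finset.mem_coe.mpr (Finset.mem_univ _)
  wlog hjj' : j < j' generalizing j j'
  · exact this j' hj' j hj hne.symm hstates.symm (by omega)
  obtain ⟨ha, hb, hbm, hexcj⟩ := hab j hj
  obtain ⟨ha', hb', hbm', hexcj'⟩ := hab j' hj'
  set a := (ab j).1
  set b := (ab j).2
  set a' := (ab j').1
  set b' := (ab j').2
  obtain ⟨haa', hb'b⟩ := hexcj.nested hexcj' hjj' (by omega) (by omega)
  obtain ⟨hstate_a, hstate_b⟩ := Prod.mk.inj hstates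
  have hfa : (w a).2 = j := hexcj.left
  have hfb : (w b).2 = j := hexcj.right
  have hfa' : (w a').2 = j' := hexcj'.left
  have hfb' : (w b').2 = j' := hexcj'.right
  have hmiddle : OCReachExactly δ (b' - a') (w a) (w b) := by
    have hlow : ∀ k, a' ≤ k → k ≤ b' → j' - j ≤ (w k).2 := fun k hk hk' =>
      (Nat.sub_le j' j).trans (hexcj'.le k hk hk')
    convert hw.reachExactly_sub (by omega) hbm' hlow using 1
    · exact Prod.ext hstate_a (by omega)
    · exact Prod.ext hstate_b (by omega)
  exact hmin (a + (b' - a') + (m - b)) (by omega)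
    (((hw.reachExactly (Nat.zero_le a) (by omega)).trans hmiddle).trans
      (hw.reachExactly hbm le_rfl))

end OCRun

end Runs

/-- In a one-counter VASS, if there is a path from `s(0)` to `t(0)`,
then there is such a path of length at most `|Q|³ + |Q|`. -/
theorem stmt10 {Q : Type*} [Fintype Q] (δ : Q → ℤ → Q → Prop)
    (hκ : ∀ a k b, δ a k b → k = -1 ∨ k = 0 ∨ k = 1)
    (s t : Q) (h : OCReach δ (s, 0) (t, 0)) :
    OCReachIn δ (Fintype.card Q ^ 3 + Fintype.card Q) (s, 0) (t, 0) := by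
  classical
  have hex := h.exists_reachExactly
  obtain ⟨w, hw0, hwm, hw⟩ := Nat.find_spec hex
  set m := Nat.find hex
  have hmin : ∀ n < m, ¬ OCReachExactly δ n (w 0) (w m) := by
    rw [hw0, hwm]
    exact fun n => Nat.find_min hex
  have hbound : ∀ p ≤ m, (w p).2 ≤ 0 + Fintype.card Q ^ 2 := fun p hp =>
    hw.counter_le_of_minimal hκ hmin (by simp [hw0]) (by simp [hwm]) hp
  have hlength := hw.length_succ_le_of_minimal hmin hbound
  refine ⟨m, ?_, w, hw0, hwm, hw⟩
  have : Fintype.card Q * (0 + Fintype.card Q ^ 2 + 1) = Fintype.card Q ^ 3 + Fintype.card Q := by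
    ring
  omega
end

section
/- Let S be a BSCC of the underlying finite Markov chain of a one-counter pVASS, and suppose the type-III region determined by S is non-empty. Then for every control state q ∈ S and every ℓ ≥ |Q|, the configuration q(ℓ) belongs to the type-III region, i.e., q(ℓ) cannot reach any configuration with zero counter. -/
/-- Edges of the underlying finite-state chain. -/
def QStep {Q : Type*} (δ : Q → ℤ → Q → Prop) (a b : Q) : Prop := ∃ k : ℤ, δ a k b

/-- `S` is a bottom strongly connected component of the underlying finite chain. -/
def IsBSCC {Q : Type*} (δ : Q → ℤ → Q → Prop) (S : Set Q) : Prop :=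
  S.Nonempty ∧ (∀ a ∈ S, ∀ b ∈ S, Relation.ReflTransGen (QStep δ) a b) ∧
    (∀ a ∈ S, ∀ b : Q, QStep δ a b → b ∈ S)

/-- The type III region determined by a BSCC `S`. -/
def typeIIIReg {Q : Type*} (δ : Q → ℤ → Q → Prop) (S : Set Q) : Set (Q × ℕ) :=
  {c | c.1 ∈ S ∧ 0 < c.2 ∧ ∀ r : Q, ¬ OCReach δ c (r, 0)}

def ReachesZero {Q : Type*} (δ : Q → ℤ → Q → Prop) (c : Q × ℕ) : Prop :=
  ∃ r : Q, OCReach δ c (r, 0)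

namespace OCReach

variable {Q : Type*} {δ : Q → ℤ → Q → Prop}

theorem add_counter {c c' : Q × ℕ} (h : OCReach δ c c') (t : ℕ) :
    OCReach δ (c.1, c.2 + t) (c'.1, c'.2 + t) := by
  induction h with
  | refl => exact .refl
  | tail _ hstep ih =>
    obtain ⟨κ, hδ, heq⟩ := hstep
    exact ih.tail ⟨κ, hδ, by push_cast; omega⟩

theorem fst_mem {S : Set Q} (hS : ∀ a ∈ S, ∀ b, QStep δ a b → b ∈ S) {c c' : Q × ℕ}
    (h : OCReach δ c c') (hc : c.1 ∈ S) : c'.1 ∈ S := by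
  induction h with
  | refl => exact hc
  | tail _ hstep ih =>
    obtain ⟨κ, hδ, _⟩ := hstep
    exact hS _ ih _ ⟨κ, hδ⟩

end OCReach

section

variable {Q : Type*} {δ : Q → ℤ → Q → Prop}

/-- Started lower, a run to zero stays legal until it reaches zero earlier, since no step
decrements by more than one. -/
theorem ReachesZero.mono (hκ : ∀ a k b, δ a k b → -1 ≤ k) {c : Q × ℕ}
    (h : ReachesZero δ c) {m : ℕ} (hm : m ≤ c.2) : ReachesZero δ (c.1, m) := by
  obtain ⟨r, hr⟩ := h
  induction hr using Relation.ReflTransGen.head_induction_on generalizing m with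
  | refl =>
    obtain rfl : m = 0 := by simpa using hm
    exact ⟨r, .refl⟩
  | @head c c' hstep _ ih =>
    rcases Nat.eq_zero_or_pos m with rfl | hm0
    · exact ⟨_, .refl⟩
    obtain ⟨κ, hδ, heq⟩ := hstep
    have := hκ _ _ _ hδ
    obtain ⟨r', hr'⟩ := ih (m := (m + κ).toNat) (by omega)
    have hfirst : OCStep δ (c.1, m) (c'.1, (m + κ).toNat) := ⟨κ, hδ, by dsimp only; omega⟩
    exact ⟨r', hr'.head hfirst⟩

/-- `σ v` is the state in which a run from `c` to zero first drops to counter value `v`. Between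
these moments the counter stays at least `v`, so that segment of the run, shifted down by `v`,
ends at zero. -/
theorem exists_levelStates (hκ : ∀ a k b, δ a k b → -1 ≤ k) {c : Q × ℕ} {r : Q}
    (h : OCReach δ c (r, 0)) :
    ∃ σ : ℕ → Q, σ c.2 = c.1 ∧
      ∀ v w, v ≤ w → w ≤ c.2 → OCReach δ (σ w, w - v) (σ v, 0) := by
  induction h using Relation.ReflTransGen.head_induction_on with
  | refl =>
    refine ⟨fun _ => r, rfl, fun v w hvw hw => ?_⟩
    obtain rfl : w = 0 := by simpa using hw
    obtain rfl : v = 0 := by omega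
    exact .refl
  | @head c c' hstep _ ih =>
    obtain ⟨σ, hσ, hlev⟩ := ih
    obtain ⟨κ, hδ, heq⟩ := hstep
    have := hκ _ _ _ hδ
    refine ⟨Function.update σ c.2 c.1, by simp, fun v w hvw hw => ?_⟩
    rcases hw.lt_or_eq with hw | rfl
    · simpa [hw.ne, (hvw.trans_lt hw).ne] using hlev v w hvw (by omega)
    rcases hvw.lt_or_eq with hv | rfl
    · have hrest : OCReach δ (c'.1, c'.2 - v) (σ v, 0) := by
        rcases (show v ≤ c'.2 by omega).lt_or_eq with hv' | rfl
        · simpa [hσ] using hlev v c'.2 hv'.le le_rfl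
        · rw [← hσ, Nat.sub_self]; exact .refl
      have hfirst : OCStep δ (c.1, c.2 - v) (c'.1, c'.2 - v) := ⟨κ, hδ, by dsimp only; omega⟩
      rw [Function.update_self, Function.update_of_ne hv.ne]
      exact hrest.head hfirst
    · rw [Function.update_self, Nat.sub_self]; exact .refl

theorem reachesZero_of_decreasing_cycle (hκ : ∀ a k b, δ a k b → -1 ≤ k) {s : Q} {d : ℕ}
    (hd : 0 < d) (hcycle : OCReach δ (s, d) (s, 0)) (m : ℕ) : ReachesZero δ (s, m) := by
  have hpump : ∀ k, OCReach δ (s, k * d) (s, 0) := by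
    intro k
    induction k with
    | zero => rw [zero_mul]; exact .refl
    | succ k ih =>
      have hshift := hcycle.add_counter (k * d)
      rw [zero_add, add_comm] at hshift
      rw [Nat.succ_mul]
      exact hshift.trans ih
  exact ReachesZero.mono hκ (c := (s, m * d)) ⟨s, hpump m⟩ (Nat.le_mul_of_pos_right m hd)

theorem reachesZero_of_reflTransGen (hκ : ∀ a k b, δ a k b → -1 ≤ k) {a b : Q}
    (hab : Relation.ReflTransGen (QStep δ) a b) (hb : ∀ m, ReachesZero δ (b, m)) (n : ℕ) :
    ReachesZero δ (a, n) := by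
  induction hab using Relation.ReflTransGen.head_induction_on generalizing n with
  | refl => exact hb n
  | @head a a' hstep _ ih =>
    rcases Nat.eq_zero_or_pos n with rfl | hn
    · exact ⟨a, .refl⟩
    obtain ⟨κ, hδ⟩ := hstep
    have := hκ _ _ _ hδ
    obtain ⟨r, hr⟩ := ih (n + κ).toNat
    have hfirst : OCStep δ (a, n) (a', (n + κ).toNat) := ⟨κ, hδ, by dsimp only; omega⟩
    exact ⟨r, hr.head hfirst⟩

theorem exists_reachesZero_forall_of_card_le [Fintype Q] (hκ : ∀ a k b, δ a k b → -1 ≤ k)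
    {q : Q} {ℓ : ℕ} (hℓ : Fintype.card Q ≤ ℓ) (h : ReachesZero δ (q, ℓ)) :
    ∃ s : Q, (∃ m, OCReach δ (q, m) (s, 0)) ∧ ∀ n, ReachesZero δ (s, n) := by
  obtain ⟨r, hr⟩ := h
  obtain ⟨σ, hσq, hlev⟩ := exists_levelStates hκ hr
  obtain ⟨v, w, hvw, hwℓ, hσ⟩ : ∃ v w : ℕ, v < w ∧ w ≤ ℓ ∧ σ v = σ w := by
    obtain ⟨x, y, hxy, hσxy⟩ := Fintype.exists_ne_map_eq_of_card_lt (fun v : Fin (ℓ + 1) => σ v)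
      (by simpa using Nat.lt_succ_of_le hℓ)
    rcases lt_or_gt_of_ne hxy with hlt | hlt
    · exact ⟨x, y, hlt, Nat.le_of_lt_succ y.isLt, hσxy⟩
    · exact ⟨y, x, hlt, Nat.le_of_lt_succ x.isLt, hσxy.symm⟩
  have hqs : OCReach δ (q, ℓ - v) (σ v, 0) := by
    simpa only [hσq] using hlev v ℓ (hvw.le.trans hwℓ) le_rfl
  have hcycle : OCReach δ (σ v, w - v) (σ v, 0) := hσ ▸ hlev v w hvw.le hwℓ
  exact ⟨σ v, ⟨ℓ - v, hqs⟩,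
    reachesZero_of_decreasing_cycle hκ (Nat.sub_pos_of_lt hvw) hcycle⟩

end

/-- If the type III region determined by a BSCC `S` is non-empty, then
for every `q ∈ S` and every `ℓ ≥ |Q|`, the configuration `q(ℓ)` belongs to it, i.e.
`q(ℓ)` cannot reach any configuration with zero counter. -/
theorem stmt12 {Q : Type*} [Fintype Q] (δ : Q → ℤ → Q → Prop) (S : Set Q)
    (hκ : ∀ a k b, δ a k b → k = -1 ∨ k = 0 ∨ k = 1)
    (hS : IsBSCC δ S)
    (hne : (typeIIIReg δ S).Nonempty) :
    ∀ q ∈ S, ∀ ℓ : ℕ, Fintype.card Q ≤ ℓ → (q, ℓ) ∈ typeIIIReg δ S := by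
  obtain ⟨-, hstrong, hclosed⟩ := hS
  obtain ⟨⟨p, k⟩, hp, -, hpz⟩ := hne
  have hdec : ∀ a k b, δ a k b → -1 ≤ k := fun a k b h => by
    rcases hκ a k b h with h | h | h <;> omega
  intro q hq ℓ hℓ
  have hℓpos : 0 < ℓ := (Fintype.card_pos_iff.mpr ⟨q⟩).trans_le hℓ
  refine ⟨hq, hℓpos, fun r hr => ?_⟩
  obtain ⟨s, ⟨m, hqs⟩, hs⟩ := exists_reachesZero_forall_of_card_le hdec hℓ ⟨r, hr⟩
  have hsS : s ∈ S := hqs.fst_mem hclosed hq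
  obtain ⟨r', hr'⟩ := reachesZero_of_reflTransGen hdec (hstrong p hp s hsS) hs k
  exact hpz r' hr'
end

section
/- Let (Θ_k)_{k≥0} be random times with Θ_{-1} = 0 such that P(Θ_k - Θ_{k-1} ≥ ℓ) ≤ â·ẑ^{√ℓ} for all k, ℓ (with â > 0, 0 < ẑ < 1), and let Rounds be a random variable with P(Rounds ≥ m) ≤ c̄^{m/2 - 1} for some 0 ≤ c̄ < 1. Then for every i ∈ ℕ, P(Θ_{Rounds} ≥ i) ≤ c̄^{(⌊√i⌋)/2 - 1} + √i · â · ẑ^{⌊i^{1/4}⌋}. -/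
/-!
If `Θ_Rounds ≥ i`, then either `Rounds ≥ s := ⌊√i⌋`, or `Θ_Rounds ≤ Θ_{s-1}` is a sum of `s`
increments, so one of them is at least `s` (otherwise `Θ_{s-1} ≤ s (s - 1) < i`). A union bound
over these `s + 1` events gives the estimate, since `⌊i^{1/4}⌋ ≤ √s`.
-/

open MeasureTheory

/-- The sequence `0, f 0, f 1, …`: its `k`-th increment is `f k - f (k - 1)` with `f (-1) = 0`. -/
def consZero (f : ℕ → ℕ) : ℕ → ℕ
  | 0 => 0
  | k + 1 => f k

theorem le_add_mul_pred_of_forall_succ_lt_add (f : ℕ → ℕ) {n ℓ : ℕ}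
    (h : ∀ k < n, f (k + 1) < f k + ℓ) : f n ≤ f 0 + n * (ℓ - 1) := by
  induction n with
  | zero => simp
  | succ k ih =>
    have hk := h k (Nat.lt_succ_self k)
    have ih := ih fun j hj ↦ h j (hj.trans (Nat.lt_succ_self k))
    rw [add_one_mul]
    omega

theorem le_mul_pred_of_forall_consZero_succ_lt_add {f : ℕ → ℕ} (hf : Monotone f) {r n ℓ : ℕ}
    (hr : r < n) (h : ∀ k < n, consZero f (k + 1) < consZero f k + ℓ) :
    f r ≤ n * (ℓ - 1) := by
  obtain ⟨m, rfl⟩ : ∃ m, n = m + 1 := ⟨n - 1, by omega⟩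
  calc f r ≤ f m := hf (Nat.le_of_lt_succ hr)
    _ = consZero f (m + 1) := rfl
    _ ≤ consZero f 0 + (m + 1) * (ℓ - 1) := le_add_mul_pred_of_forall_succ_lt_add _ h
    _ = (m + 1) * (ℓ - 1) := zero_add _

theorem setOf_le_stopped_subset_union {Ω : Type*} {Θ : ℕ → Ω → ℕ} (hΘ : ∀ ω, Monotone (Θ · ω))
    (R : Ω → ℕ) {i n ℓ : ℕ} (hi : 0 < n → n * (ℓ - 1) < i) :
    {ω | i ≤ Θ (R ω) ω} ⊆ {ω | n ≤ R ω} ∪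
      ⋃ k ∈ Finset.range n, {ω | consZero (Θ · ω) k + ℓ ≤ consZero (Θ · ω) (k + 1)} := by
  intro ω (hω : i ≤ Θ (R ω) ω)
  by_contra hnot
  simp only [Set.mem_union, Set.mem_ofPred_eq, Set.mem_iUnion, Finset.mem_range, not_or,
    not_exists, not_le] at hnot
  obtain ⟨hR, hsmall⟩ := hnot
  have hΘR := le_mul_pred_of_forall_consZero_succ_lt_add (hΘ ω) hR hsmall
  have hni := hi (by omega)
  omega

theorem floor_rpow_quarter_le_sqrt_nat_sqrt (i : ℕ) :
    ((⌊(i : ℝ) ^ ((1 : ℝ) / 4)⌋ : ℤ) : ℝ) ≤ Real.sqrt (Nat.sqrt i) := by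
  set q : ℝ := (i : ℝ) ^ ((1 : ℝ) / 4)
  have hq : q ^ 2 = Real.sqrt i := by
    rw [Real.sqrt_eq_rpow, ← Real.rpow_natCast, ← Real.rpow_mul (Nat.cast_nonneg i)]
    norm_num
  rcases lt_or_ge ⌊q⌋ 0 with hneg | hnonneg
  · exact (Int.cast_lt_zero.mpr hneg).le.trans (Real.sqrt_nonneg _)
  refine Real.le_sqrt_of_sq_le ?_
  have hsq : ((⌊q⌋ ^ 2 : ℤ) : ℝ) ≤ Real.sqrt i := by
    push_cast
    rw [← hq]
    exact pow_le_pow_left₀ (Int.cast_nonneg hnonneg) (Int.floor_le q) 2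
  have := Int.le_floor.mpr hsq
  rw [Real.floor_real_sqrt_eq_nat_sqrt] at this
  exact_mod_cast this

theorem stmt18_general {Ω : Type*} [MeasurableSpace Ω] (μ : Measure Ω) [IsProbabilityMeasure μ]
    (Θ : ℕ → Ω → ℕ) (Rounds : Ω → ℕ) (ahat zhat cbar : ℝ)
    (hahat : 0 < ahat) (hz0 : 0 < zhat) (hz1 : zhat < 1)
    (hmono : ∀ (k : ℕ) (ω : Ω), Θ k ω ≤ Θ (k + 1) ω)
    (h0 : ∀ ℓ : ℕ, (μ {ω | ℓ ≤ Θ 0 ω}).toReal ≤ ahat * zhat ^ Real.sqrt ℓ)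
    (hinc : ∀ k ℓ : ℕ,
      (μ {ω | Θ k ω + ℓ ≤ Θ (k + 1) ω}).toReal ≤ ahat * zhat ^ Real.sqrt ℓ)
    (hrounds : ∀ m : ℕ, (μ {ω | m ≤ Rounds ω}).toReal ≤ cbar ^ ((m : ℝ) / 2 - 1)) :
    ∀ i : ℕ, (μ {ω | i ≤ Θ (Rounds ω) ω}).toReal ≤
      cbar ^ ((Nat.sqrt i : ℝ) / 2 - 1) +
        Real.sqrt i * ahat * zhat ^ ((⌊(i : ℝ) ^ ((1 : ℝ) / 4)⌋ : ℤ) : ℝ) := by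
  intro i
  set s := Nat.sqrt i
  set E : ℕ → Set Ω := fun k ↦ {ω | consZero (Θ · ω) k + s ≤ consZero (Θ · ω) (k + 1)}
  have hsub : {ω | i ≤ Θ (Rounds ω) ω} ⊆ {ω | s ≤ Rounds ω} ∪ ⋃ k ∈ Finset.range s, E k :=
    setOf_le_stopped_subset_union (fun ω ↦ monotone_nat_of_le_succ (hmono · ω)) Rounds
      fun hs ↦ (Nat.mul_lt_mul_of_pos_left (Nat.sub_lt hs one_pos) hs).trans_le (Nat.sqrt_le i)
  have hE : ∀ k ∈ Finset.range s, μ.real (E k) ≤ ahat * zhat ^ Real.sqrt s := by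
    rintro (_ | k) -
    · simp only [E, consZero, zero_add]
      exact h0 s
    · exact hinc k s
  have hz : zhat ^ Real.sqrt s ≤ zhat ^ ((⌊(i : ℝ) ^ ((1 : ℝ) / 4)⌋ : ℤ) : ℝ) :=
    Real.rpow_le_rpow_of_exponent_ge hz0 hz1.le (floor_rpow_quarter_le_sqrt_nat_sqrt i)
  calc μ.real {ω | i ≤ Θ (Rounds ω) ω}
      ≤ μ.real {ω | s ≤ Rounds ω} + ∑ k ∈ Finset.range s, μ.real (E k) :=
        (measureReal_mono hsub).trans <| (measureReal_union_le _ _).trans <|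
          add_le_add_right (measureReal_biUnion_finset_le _ _) _
    _ ≤ cbar ^ ((s : ℝ) / 2 - 1) + s * (ahat * zhat ^ Real.sqrt s) := by
        gcongr
        · exact hrounds s
        · simpa using Finset.sum_le_card_nsmul _ _ _ hE
    _ ≤ _ := by
        rw [← mul_assoc]
        gcongr
        exact Real.nat_sqrt_le_real_sqrt

/-- Let `(Θ_k)` be nondecreasing random times (with `Θ_{-1} = 0`, so the
`0`-th increment is `Θ_0` itself) whose increments have sub-exponential tails
`P(Θ_k - Θ_{k-1} ≥ ℓ) ≤ â · ẑ^{√ℓ}`, and let `Rounds` satisfy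
`P(Rounds ≥ m) ≤ c̄^{m/2 - 1}` for some `0 ≤ c̄ < 1`.  Then for every `i`,
`P(Θ_{Rounds} ≥ i) ≤ c̄^{⌊√i⌋/2 - 1} + √i · â · ẑ^{⌊i^{1/4}⌋}`. -/
theorem stmt18 {Ω : Type*} [MeasurableSpace Ω] (μ : Measure Ω) [IsProbabilityMeasure μ]
    (Θ : ℕ → Ω → ℕ) (Rounds : Ω → ℕ) (ahat zhat cbar : ℝ)
    (hahat : 0 < ahat) (hz0 : 0 < zhat) (hz1 : zhat < 1)
    (hc0 : 0 ≤ cbar) (hc1 : cbar < 1)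
    (hmono : ∀ (k : ℕ) (ω : Ω), Θ k ω ≤ Θ (k + 1) ω)
    (h0 : ∀ ℓ : ℕ, (μ {ω | ℓ ≤ Θ 0 ω}).toReal ≤ ahat * zhat ^ Real.sqrt ℓ)
    (hinc : ∀ k ℓ : ℕ,
      (μ {ω | Θ k ω + ℓ ≤ Θ (k + 1) ω}).toReal ≤ ahat * zhat ^ Real.sqrt ℓ)
    (hrounds : ∀ m : ℕ, (μ {ω | m ≤ Rounds ω}).toReal ≤ cbar ^ ((m : ℝ) / 2 - 1)) :
    ∀ i : ℕ, (μ {ω | i ≤ Θ (Rounds ω) ω}).toReal ≤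
      cbar ^ ((Nat.sqrt i : ℝ) / 2 - 1) +
        Real.sqrt i * ahat * zhat ^ ((⌊(i : ℝ) ^ ((1 : ℝ) / 4)⌋ : ℤ) : ℝ) :=
  stmt18_general μ Θ Rounds ahat zhat cbar hahat hz0 hz1 hmono h0 hinc hrounds
end

section
/- Let G be a stochastic matrix over a finite set S with a single BSCC, arising as the termination-distribution matrix of a one-counter system: G[p,q] > 0 iff there is a zero-to-zero path witnessing a counter decrease from p to q. Formally, write p →ᵏ q if there is a path in the one-counter system from p(n) to q(n+k) for some n ≥ 0; assume for all p, q ∈ S: (∃k < 0: p →ᵏ q) iff there is a nonempty path from p to q in the graph of G. If B ⊆ S is a BSCC of the graph of G and the relation →ᵏ is closed under composition (p →ᵏ q and q →ˡ r imply p →^{k+l} r), then every p ∈ S can reach every q ∈ B in the graph of G; hence G has exactly one BSCC when the one-counter system is strongly connected. -/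
/-- `B` is a bottom strongly connected component of the (total) graph `G`:
nonempty, strongly connected, and closed under edges. -/
def IsBSCCOf {S : Type*} (G : S → S → Prop) (B : Set S) : Prop :=
  B.Nonempty ∧ (∀ a ∈ B, ∀ b ∈ B, Relation.ReflTransGen G a b) ∧
    (∀ a ∈ B, ∀ b : S, G a b → b ∈ B)

/-!
Every state `q` of a BSCC lies on a cycle of `G`, hence `q →ˡ q` for some `ℓ < 0`. By strong
connectivity `p →ᵏ q` for some `k`, and composing with the cycle `a` times gives
`p →^(k + aℓ) q`; for `a` large this effect is negative, so `p` reaches `q` in `G`. A BSCC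
reachable from everywhere is the only one.
-/

namespace IsBSCCOf

variable {S : Type*} {G : S → S → Prop} {B : Set S}

theorem mem_of_reflTransGen (hB : IsBSCCOf G B) {a b : S} (ha : a ∈ B)
    (hab : Relation.ReflTransGen G a b) : b ∈ B := by
  induction hab with
  | refl => exact ha
  | tail _ hstep ih => exact hB.2.2 _ ih _ hstep

theorem transGen_self (hB : IsBSCCOf G B) (htotal : ∀ a : S, ∃ b : S, G a b) {q : S}
    (hq : q ∈ B) : Relation.TransGen G q q := by
  obtain ⟨b, hqb⟩ := htotal q
  exact Relation.TransGen.head' hqb (hB.2.1 b (hB.2.2 q hq b hqb) q hq)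

theorem eq_of_forall_reflTransGen {B' : Set S} (hB : IsBSCCOf G B) (hB' : IsBSCCOf G B')
    (hreach : ∀ p : S, ∀ q ∈ B, Relation.ReflTransGen G p q) : B' = B := by
  obtain ⟨b', hb'⟩ := hB'.1
  have hBB' : B ⊆ B' := fun x hx => hB'.mem_of_reflTransGen hb' (hreach b' x hx)
  obtain ⟨q, hq⟩ := hB.1
  refine Set.Subset.antisymm (fun x hx => ?_) hBB'
  exact hB.mem_of_reflTransGen hq (hB'.2.1 q (hBB' hq) x hx)

end IsBSCCOf

section Pumping

variable {S : Type*} {arrow : S → ℤ → S → Prop}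

theorem arrow_add_mul_of_cycle
    (hcomp : ∀ (p q r : S) (k l : ℤ), arrow p k q → arrow q l r → arrow p (k + l) r)
    {p q : S} {k l : ℤ} (hpq : arrow p k q) (hqq : arrow q l q) (a : ℕ) :
    arrow p (k + a * l) q := by
  induction a with
  | zero => simpa using hpq
  | succ a ih => simpa [add_mul, add_assoc] using hcomp p q q _ l ih hqq

theorem exists_neg_arrow_of_neg_cycle
    (hcomp : ∀ (p q r : S) (k l : ℤ), arrow p k q → arrow q l r → arrow p (k + l) r)
    {p q : S} {k l : ℤ} (hpq : arrow p k q) (hqq : arrow q l q) (hl : l < 0) :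
    ∃ m : ℤ, m < 0 ∧ arrow p m q := by
  refine ⟨k + (k.toNat + 1 : ℕ) * l, ?_, arrow_add_mul_of_cycle hcomp hpq hqq _⟩
  have hk : k < (k.toNat + 1 : ℕ) := by omega
  nlinarith

end Pumping

theorem stmt19_general {S : Type*}
    (G : S → S → Prop) (arrow : S → ℤ → S → Prop) (B : Set S)
    (htotal : ∀ a : S, ∃ b : S, G a b)
    (hiff : ∀ p q : S, (∃ k : ℤ, k < 0 ∧ arrow p k q) ↔ Relation.TransGen G p q)
    (hcomp : ∀ (p q r : S) (k l : ℤ), arrow p k q → arrow q l r → arrow p (k + l) r)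
    (hconn : ∀ p q : S, ∃ k : ℤ, arrow p k q)
    (hB : IsBSCCOf G B) :
    (∀ p : S, ∀ q ∈ B, Relation.ReflTransGen G p q) ∧
      ∀ B' : Set S, IsBSCCOf G B' → B' = B := by
  have hreach : ∀ p : S, ∀ q ∈ B, Relation.ReflTransGen G p q := by
    intro p q hq
    obtain ⟨l, hl, hqq⟩ := (hiff q q).mpr (hB.transGen_self htotal hq)
    obtain ⟨k, hpq⟩ := hconn p q
    exact ((hiff p q).mp (exists_neg_arrow_of_neg_cycle hcomp hpq hqq hl)).to_reflTransGen
  exact ⟨hreach, fun B' hB' => hB.eq_of_forall_reflTransGen hB' hreach⟩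

/-- Let `G` be the graph of the termination-distribution matrix of a
strongly connected one-counter system over `S` (with every state having an outgoing
`G`-edge, since the matrix is stochastic), and write `p →ᵏ q` (`arrow p k q`) for the
existence of a path from `p(n)` to `q(n+k)` for some `n ≥ 0`.  Assume:
`(∃ k < 0, p →ᵏ q) ↔` there is a nonempty `G`-path from `p` to `q`; `→ᵏ` composes
additively; and for all `p, q` there is some `k` with `p →ᵏ q` (strong connectivity).
Then for every BSCC `B` of `G`, every `p ∈ S` reaches every `q ∈ B` in the graph of
`G`; hence `B` is the unique BSCC of `G`. -/
theorem stmt19 {S : Type*} [Fintype S]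
    (G : S → S → Prop) (arrow : S → ℤ → S → Prop) (B : Set S)
    (htotal : ∀ a : S, ∃ b : S, G a b)
    (hiff : ∀ p q : S, (∃ k : ℤ, k < 0 ∧ arrow p k q) ↔ Relation.TransGen G p q)
    (hcomp : ∀ (p q r : S) (k l : ℤ), arrow p k q → arrow q l r → arrow p (k + l) r)
    (hconn : ∀ p q : S, ∃ k : ℤ, arrow p k q)
    (hB : IsBSCCOf G B) :
    (∀ p : S, ∀ q ∈ B, Relation.ReflTransGen G p q) ∧
      ∀ B' : Set S, IsBSCCOf G B' → B' = B :=
  stmt19_general G arrow B htotal hiff hcomp hconn hB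
end
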